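/- arXiv:2203.00318 — 2 statements merged into one kernel-verified Lean document; each statement's English description precedes it below -/
import Mathlib

section
/- Let α > 0, β ≥ 0, h > 0 and a ∈ (0, 2π) with a ≠ π. If c > F(a) := α/(2cos²(a/2)) + β/h² + 2tan²(a/2)·(β/h²)·(β/(αh²) + 1), then there exists z ∈ ℂ with Re(z) > 0 satisfying z² + (α − (β/h²)(e^{ia} − 1))·z − α·c·(e^{ia} − 1) = 0. That is, above the critical curve the Fourier mode a is linearly unstable. -/
open Real Complex

/-!
The roots of `z² + B z + D` are `(±w - B) / 2` with `w² = B² - 4D`, so one of them lies in the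
open right half-plane iff `Re B < |Re w|`. Comparing real and imaginary parts of
`w² = B² - 4D` gives
`((Re w)² - (Re B)²) ((Im w)² + (Re B)²) = -4 ((Re B)² Re D + Re B Im B Im D - (Im D)²)`,
so for `Re B > 0` such a root exists as soon as the last bracket is negative.

For `B = α - k (e^{ia} - 1)` and `D = -α c (e^{ia} - 1)` with `k = β/h²`, that bracket equals
`2αc sin²(a/2) ((α + 2k sin²(a/2)) (α + 2k) - 2αc cos²(a/2))`, and
`F(a) = (α + 2k sin²(a/2)) (α + 2k) / (2α cos²(a/2))`.
-/

theorem exists_quadratic_root_re_pos (B D : ℂ) (hB : 0 < B.re)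
    (hBD : B.re ^ 2 * D.re + B.re * B.im * D.im - D.im ^ 2 < 0) :
    ∃ z : ℂ, 0 < z.re ∧ z ^ 2 + B * z + D = 0 := by
  obtain ⟨w, hw⟩ := IsAlgClosed.exists_pow_nat_eq (B ^ 2 - 4 * D) two_pos
  have hre : w.re ^ 2 - w.im ^ 2 = B.re ^ 2 - B.im ^ 2 - 4 * D.re := by
    simpa [sq] using congrArg Complex.re hw
  have him : w.re * w.im = B.re * B.im - 2 * D.im := by
    have := congrArg Complex.im hw
    simp only [sq, mul_im, sub_im] at this
    norm_num at this
    linarith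
  have hprod : (w.re ^ 2 - B.re ^ 2) * (w.im ^ 2 + B.re ^ 2)
      = -4 * (B.re ^ 2 * D.re + B.re * B.im * D.im - D.im ^ 2) := by
    linear_combination (w.re * w.im + B.re * B.im - 2 * D.im) * him + B.re ^ 2 * hre
  have hsq : B.re ^ 2 < w.re ^ 2 := by
    have : 0 < (w.re ^ 2 - B.re ^ 2) * (w.im ^ 2 + B.re ^ 2) := by rw [hprod]; linarith
    exact sub_pos.mp (pos_of_mul_pos_left this (by positivity))
  have habs : B.re < |w.re| := abs_of_pos hB ▸ sq_lt_sq.mp hsq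
  rcases lt_abs.mp habs with h | h
  · exact ⟨(w - B) / 2, by simp; linarith, by linear_combination hw / 4⟩
  · exact ⟨(-w - B) / 2, by simp; linarith, by linear_combination hw / 4⟩

theorem exp_I_mul_ofReal_sub_one_re (a : ℝ) :
    (exp (I * a) - 1).re = -2 * Real.sin (a / 2) ^ 2 := by
  rw [sub_re, mul_comm, exp_ofReal_mul_I_re, one_re]
  linear_combination (by ring_nf : Real.cos a = Real.cos (2 * (a / 2))) +
    Real.cos_two_mul_eq_one_sub (a / 2)

theorem exp_I_mul_ofReal_sub_one_im (a : ℝ) :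
    (exp (I * a) - 1).im = 2 * Real.sin (a / 2) * Real.cos (a / 2) := by
  rw [sub_im, mul_comm, exp_ofReal_mul_I_im, one_im, sub_zero, ← Real.sin_two_mul]
  ring_nf

theorem critical_curve_mul_eq (α β h a : ℝ) (hα : α ≠ 0) (hh : h ≠ 0)
    (hC : Real.cos (a / 2) ≠ 0) :
    (α / (2 * Real.cos (a / 2) ^ 2) + β / h ^ 2
        + 2 * Real.tan (a / 2) ^ 2 * (β / h ^ 2) * (β / (α * h ^ 2) + 1))
      * (2 * α * Real.cos (a / 2) ^ 2)
      = (α + 2 * (β / h ^ 2) * Real.sin (a / 2) ^ 2) * (α + 2 * (β / h ^ 2)) := by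
  rw [Real.tan_eq_sin_div_cos]
  field_simp
  linear_combination 2 * α * h ^ 2 * β * Real.sin_sq_add_cos_sq (a / 2)

theorem exists_characteristic_root_re_pos (α k γ a : ℝ) (hα : 0 < α) (hk : 0 ≤ k)
    (hS : Real.sin (a / 2) ≠ 0)
    (hcrit : (α + 2 * k * Real.sin (a / 2) ^ 2) * (α + 2 * k) < 2 * γ * Real.cos (a / 2) ^ 2) :
    ∃ z : ℂ, 0 < z.re ∧
      z ^ 2 + ((α : ℂ) - k * (exp (I * a) - 1)) * z - γ * (exp (I * a) - 1) = 0 := by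
  set S := Real.sin (a / 2)
  set C := Real.cos (a / 2)
  have hp : 0 < α + 2 * k * S ^ 2 := by positivity
  have hγ : 0 < γ := by
    have : 0 < 2 * γ * C ^ 2 := lt_of_le_of_lt (by positivity) hcrit
    nlinarith [sq_nonneg C]
  have hSC : S ^ 2 + C ^ 2 = 1 := sin_sq_add_cos_sq _
  have hE : (exp (I * a) - 1).re = -2 * S ^ 2 ∧ (exp (I * a) - 1).im = 2 * S * C :=
    ⟨exp_I_mul_ofReal_sub_one_re a, exp_I_mul_ofReal_sub_one_im a⟩
  have hkey : 0 < 2 * γ * S ^ 2 * (2 * γ * C ^ 2 - (α + 2 * k * S ^ 2) * (α + 2 * k)) := by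
    have : 0 < S ^ 2 := by positivity
    have := sub_pos.mpr hcrit
    positivity
  set B : ℂ := α - k * (exp (I * a) - 1)
  set D : ℂ := -(γ * (exp (I * a) - 1))
  have hB : 0 < B.re := by simp [B, hE]; linarith
  have hBD : B.re ^ 2 * D.re + B.re * B.im * D.im - D.im ^ 2 < 0 := by
    simp only [B, D, sub_re, sub_im, neg_re, neg_im, mul_re, mul_im, ofReal_re, ofReal_im, hE]
    linear_combination hkey + (4 * α * k * γ * S ^ 2 + 8 * k ^ 2 * γ * S ^ 4) * hSC
  obtain ⟨z, hz, hroot⟩ := exists_quadratic_root_re_pos B D hB hBD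
  exact ⟨z, hz, by linear_combination hroot⟩

/-- Above the critical curve the Fourier mode `a` is linearly unstable: if
`c > F(a) = α/(2 cos²(a/2)) + β/h² + 2 tan²(a/2) (β/h²)(β/(α h²) + 1)`,
then the characteristic quadratic has a root with strictly positive real part. -/
theorem instability_above_critical_curve
    (α β h c : ℝ) (hα : 0 < α) (hβ : 0 ≤ β) (hh : 0 < h)
    (a : ℝ) (ha : a ∈ Set.Ioo (0 : ℝ) (2 * Real.pi)) (haπ : a ≠ Real.pi)
    (hc : c > α / (2 * Real.cos (a / 2) ^ 2) + β / h ^ 2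
        + 2 * Real.tan (a / 2) ^ 2 * (β / h ^ 2) * (β / (α * h ^ 2) + 1)) :
    ∃ z : ℂ, 0 < z.re ∧
      z ^ 2 + ((α : ℂ) - ((β : ℂ) / (h : ℂ) ^ 2) * (Complex.exp (Complex.I * a) - 1)) * z
        - (α : ℂ) * (c : ℂ) * (Complex.exp (Complex.I * a) - 1) = 0 := by
  obtain ⟨ha₀, ha₂π⟩ := ha
  have hS : Real.sin (a / 2) ≠ 0 := (Real.sin_pos_of_pos_of_lt_pi (by linarith) (by linarith)).ne'
  have hC : Real.cos (a / 2) ≠ 0 := by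
    rcases haπ.lt_or_gt with hlt | hgt
    · exact (Real.cos_pos_of_mem_Ioo ⟨by linarith, by linarith⟩).ne'
    · exact (Real.cos_neg_of_pi_div_two_lt_of_lt (by linarith) (by linarith)).ne
  have hcrit : (α + 2 * (β / h ^ 2) * Real.sin (a / 2) ^ 2) * (α + 2 * (β / h ^ 2))
      < 2 * (α * c) * Real.cos (a / 2) ^ 2 := by
    rw [← critical_curve_mul_eq α β h a hα.ne' hh.ne' hC]
    linarith [mul_lt_mul_of_pos_right hc (by positivity : 0 < 2 * α * Real.cos (a / 2) ^ 2)]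
  obtain ⟨z, hz, hroot⟩ := exists_characteristic_root_re_pos α (β / h ^ 2) (α * c) a hα
    (by positivity) hS hcrit
  exact ⟨z, hz, by exact_mod_cast hroot⟩
end

section
/- Let α > 0, β ≥ 0, d_s > 0, ε ≥ 0, and let h̄₁, h̄₂ ∈ ℝ with 2·d_s < h̄₂. Suppose V₁, V₂ : ℝ → ℝ with V₂ strictly increasing on (d_s, ∞), V₁ nondecreasing on [h̄₁, ∞), and V₁(h̄₁) = V₂(h̄₂). Then for every d₂ ∈ (d_s, h̄₂ − d_s), α·(V₂(d₂) − V₁(h̄₁ + ε)) + (β/d₂²)·(V₂(h̄₂) − V₁(h̄₁ + ε)) < 0. Hence a nonnegative perturbation of the headways of lane 1 never activates lane changes from lane 1 to lane 2. -/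
/-!
Both velocity differences in the gain have the sign of `V₂ - V₁(h̄₁ + ε)`: an admissible gap
`d₂ < h̄₂` gives `V₂(d₂) < V₂(h̄₂)`, while `V₂(h̄₂) = V₁(h̄₁) ≤ V₁(h̄₁ + ε)`. So the relaxation term
is negative and the interaction term is nonpositive.
-/

lemma mul_sub_add_mul_sub_neg {α γ x y v : ℝ} (hα : 0 < α) (hγ : 0 ≤ γ) (hx : x < v)
    (hy : y ≤ v) : α * (x - v) + γ * (y - v) < 0 :=
  add_neg_of_neg_of_nonpos (mul_neg_of_pos_of_neg hα (sub_neg.2 hx))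
    (mul_nonpos_of_nonneg_of_nonpos hγ (sub_nonpos.2 hy))

lemma StrictMonoOn.lt_of_mem_Ioo_sub {f : ℝ → ℝ} {ds h d : ℝ} (hf : StrictMonoOn f (Set.Ioi ds))
    (hds : 0 ≤ ds) (hd : d ∈ Set.Ioo ds (h - ds)) : f d < f h := by
  have hdh : d < h := by linarith [hd.2]
  exact hf hd.1 (hd.1.trans hdh) hdh

theorem no_lane_change_one_to_two_nonnegative_perturbation_general
    (α β ds ε h₁ h₂ : ℝ) (hα : 0 < α) (hβ : 0 ≤ β) (hds : 0 < ds) (hε : 0 ≤ ε)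
    (V₁ V₂ : ℝ → ℝ)
    (hV₂ : StrictMonoOn V₂ (Set.Ioi ds))
    (hV₁ : MonotoneOn V₁ (Set.Ici h₁))
    (heq : V₁ h₁ = V₂ h₂) :
    ∀ d₂ ∈ Set.Ioo ds (h₂ - ds),
      α * (V₂ d₂ - V₁ (h₁ + ε)) + (β / d₂ ^ 2) * (V₂ h₂ - V₁ (h₁ + ε)) < 0 := by
  intro d₂ hd₂
  have hgap : V₂ d₂ < V₂ h₂ := hV₂.lt_of_mem_Ioo_sub hds.le hd₂
  have hperturbed : V₂ h₂ ≤ V₁ (h₁ + ε) :=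
    heq ▸ hV₁ Set.self_mem_Ici (by simpa using hε) (le_add_of_nonneg_right hε)
  exact mul_sub_add_mul_sub_neg hα (div_nonneg hβ (sq_nonneg d₂)) (hgap.trans_le hperturbed)
    hperturbed

/-- A nonnegative perturbation `ε ≥ 0` of the headways of lane 1 (vehicles travelling
at `V₁(h̄₁ + ε)`) never activates lane changes from lane 1 to lane 2: for every
admissible gap `d₂ ∈ (d_s, h̄₂ - d_s)` in lane 2, the acceleration gain
`α (V₂(d₂) - V₁(h̄₁+ε)) + (β/d₂²)(V₂(h̄₂) - V₁(h̄₁+ε))` is negative. -/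
theorem no_lane_change_one_to_two_nonnegative_perturbation
    (α β ds ε h₁ h₂ : ℝ) (hα : 0 < α) (hβ : 0 ≤ β) (hds : 0 < ds) (hε : 0 ≤ ε)
    (hh₂ : 2 * ds < h₂)
    (V₁ V₂ : ℝ → ℝ)
    (hV₂ : StrictMonoOn V₂ (Set.Ioi ds))
    (hV₁ : MonotoneOn V₁ (Set.Ici h₁))
    (heq : V₁ h₁ = V₂ h₂) :
    ∀ d₂ ∈ Set.Ioo ds (h₂ - ds),
      α * (V₂ d₂ - V₁ (h₁ + ε)) + (β / d₂ ^ 2) * (V₂ h₂ - V₁ (h₁ + ε)) < 0 :=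
  no_lane_change_one_to_two_nonnegative_perturbation_general α β ds ε h₁ h₂ hα hβ hds hε V₁ V₂ hV₂
    hV₁ heq
end
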